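/- arXiv:2305.15022 — 2 statements merged into one kernel-verified Lean document; each statement's English description precedes it below -/
import Mathlib

section
/- In the dot product agglomerative clustering algorithm with any symmetric real-valued input affinity, the sequence of merge heights is non-increasing: if $w_m$ is the cluster formed at step $m$ by merging the pair $u_m, v_m \in P_{m-1}$ with maximal affinity, and $\hat h(w_m) := \hat\alpha(u_m, v_m)$, then $\hat h(w_m) \geq \hat h(w_{m+1})$ for all $m$. Equivalently, the output height function satisfies $\hat h(v) \geq \hat h(\mathrm{Pa}_v)$ for every non-root vertex $v$ of the output tree. -/
/-- A run of the dot product agglomerative clustering algorithm (Algorithm 1); see the paper.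
`P m` is the partition after `m` merges; at step `m` the pair of distinct blocks
`u m, v m` of `P m` with largest affinity `g (u m) (v m)` is merged, and the new block's
affinity to any other block is the weighted average of the constituents' affinities. -/
structure AggloRun (n : ℕ) (f : Fin n → Fin n → ℝ) where
  P : ℕ → Finset (Finset (Fin n))
  g : Finset (Fin n) → Finset (Fin n) → ℝ
  u : ℕ → Finset (Fin n)
  v : ℕ → Finset (Fin n)
  hP0 : P 0 = Finset.univ.image (fun i => ({i} : Finset (Fin n)))
  hsingle : ∀ i j : Fin n, g {i} {j} = f i j
  hgsymm : ∀ a b, g a b = g b a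
  hu : ∀ m, m + 1 < n → u m ∈ P m
  hv : ∀ m, m + 1 < n → v m ∈ P m
  huv : ∀ m, m + 1 < n → u m ≠ v m
  hmax : ∀ m, m + 1 < n → ∀ a b, a ∈ P m → b ∈ P m → a ≠ b → g a b ≤ g (u m) (v m)
  hstep : ∀ m, m + 1 < n → P (m + 1) = insert (u m ∪ v m) (((P m).erase (u m)).erase (v m))
  hupdate : ∀ m, m + 1 < n → ∀ t ∈ ((P m).erase (u m)).erase (v m),
    g (u m ∪ v m) t = ((u m).card : ℝ) / ((u m ∪ v m).card) * g (u m) t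
      + ((v m).card : ℝ) / ((u m ∪ v m).card) * g (v m) t


lemma agglo_inv (n : ℕ) (f : Fin n → Fin n → ℝ) (R : AggloRun n f) :
    ∀ m, m < n → (∀ a ∈ R.P m, a.Nonempty) ∧
      (∀ a ∈ R.P m, ∀ b ∈ R.P m, a ≠ b → Disjoint a b) := by
  intro m
  induction m with
  | zero =>
    intro _
    rw [R.hP0]
    constructor
    · intro a ha
      obtain ⟨i, -, rfl⟩ := Finset.mem_image.1 ha
      exact Finset.singleton_nonempty i
    · intro a ha b hb hab
      obtain ⟨i, -, rfl⟩ := Finset.mem_image.1 ha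
      obtain ⟨j, -, rfl⟩ := Finset.mem_image.1 hb
      have : i ≠ j := fun h => hab (by rw [h])
      simp [Finset.disjoint_singleton, this, this.symm]
  | succ m ih =>
    intro hm1
    have hmn : m < n := Nat.lt_of_succ_lt hm1
    obtain ⟨hne, hdisj⟩ := ih hmn
    have hum := R.hu m hm1
    have hvm := R.hv m hm1
    rw [R.hstep m hm1]
    have hS : ∀ t ∈ ((R.P m).erase (R.u m)).erase (R.v m),
        t ∈ R.P m ∧ t ≠ R.u m ∧ t ≠ R.v m := by
      intro t ht
      have h1 := Finset.mem_of_mem_erase ht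
      exact ⟨Finset.mem_of_mem_erase h1, Finset.ne_of_mem_erase h1,
        Finset.ne_of_mem_erase ht⟩
    constructor
    · intro a ha
      rcases Finset.mem_insert.1 ha with rfl | ha
      · exact (hne _ hum).mono Finset.subset_union_left
      · exact hne _ (hS _ ha).1
    · intro a ha b hb hab
      rcases Finset.mem_insert.1 ha with rfl | ha <;>
        rcases Finset.mem_insert.1 hb with rfl | hb
      · exact absurd rfl hab
      · obtain ⟨hbP, hbu, hbv⟩ := hS _ hb
        exact Finset.disjoint_union_left.2
          ⟨(hdisj _ hbP _ hum hbu).symm,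
           hdisj _ hvm _ hbP (Ne.symm hbv)⟩
      · obtain ⟨haP, hau, hav⟩ := hS _ ha
        exact Finset.disjoint_union_right.2
          ⟨hdisj _ haP _ hum hau, hdisj _ haP _ hvm hav⟩
      · exact hdisj _ (hS _ ha).1 _ (hS _ hb).1 hab

/-- Proposition 1: the sequence of merge heights `ĥ(w_m) = ĝ(u_m, v_m)` produced by the
algorithm is non-increasing; equivalently, each vertex of the output dendrogram is at least
as high as its parent. -/
theorem stmt_4 (n : ℕ) (f : Fin n → Fin n → ℝ) (hf : ∀ i j, f i j = f j i)
    (R : AggloRun n f) :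
    ∀ m, m + 2 < n → R.g (R.u (m + 1)) (R.v (m + 1)) ≤ R.g (R.u m) (R.v m) := by
  intro m hm2
  have hm1 : m + 1 < n := Nat.lt_of_succ_lt hm2
  have hmn : m < n := Nat.lt_of_succ_lt hm1
  obtain ⟨hne, hdisj⟩ := agglo_inv n f R m hmn
  have hum := R.hu m hm1
  have hvm := R.hv m hm1
  have huvd : Disjoint (R.u m) (R.v m) := hdisj _ hum _ hvm (R.huv m hm1)
  have hcard : ((R.u m ∪ R.v m).card : ℝ) = (R.u m).card + (R.v m).card := by
    rw [Finset.card_union_of_disjoint huvd]; push_cast; ring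
  have hwpos : (0:ℝ) < (R.u m ∪ R.v m).card := by
    have := (hne _ hum).mono (Finset.subset_union_left (s₂ := R.v m))
    exact_mod_cast Finset.card_pos.2 this
  set M := R.g (R.u m) (R.v m) with hM
  -- key: g (u∪v) t ≤ M for t in the erased set
  have key : ∀ t ∈ ((R.P m).erase (R.u m)).erase (R.v m),
      R.g (R.u m ∪ R.v m) t ≤ M := by
    intro t ht
    have h1 := Finset.mem_of_mem_erase ht
    have htP : t ∈ R.P m := Finset.mem_of_mem_erase h1
    have htu : t ≠ R.u m := Finset.ne_of_mem_erase h1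
    have htv : t ≠ R.v m := Finset.ne_of_mem_erase ht
    have hgu : R.g (R.u m) t ≤ M := R.hmax m hm1 _ _ hum htP (Ne.symm htu)
    have hgv : R.g (R.v m) t ≤ M := R.hmax m hm1 _ _ hvm htP (Ne.symm htv)
    rw [R.hupdate m hm1 t ht]
    have hau : (0:ℝ) ≤ ((R.u m).card : ℝ) / ((R.u m ∪ R.v m).card) :=
      div_nonneg (by positivity) (le_of_lt hwpos)
    have hav : (0:ℝ) ≤ ((R.v m).card : ℝ) / ((R.u m ∪ R.v m).card) :=
      div_nonneg (by positivity) (le_of_lt hwpos)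
    have hsum : ((R.u m).card : ℝ) / ((R.u m ∪ R.v m).card)
        + ((R.v m).card : ℝ) / ((R.u m ∪ R.v m).card) = 1 := by
      rw [← add_div, ← hcard, div_self (ne_of_gt hwpos)]
    calc ((R.u m).card : ℝ) / ((R.u m ∪ R.v m).card) * R.g (R.u m) t
          + ((R.v m).card : ℝ) / ((R.u m ∪ R.v m).card) * R.g (R.v m) t
        ≤ ((R.u m).card : ℝ) / ((R.u m ∪ R.v m).card) * M
          + ((R.v m).card : ℝ) / ((R.u m ∪ R.v m).card) * M := by
          gcongr
      _ = M := by rw [← add_mul, hsum, one_mul]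
  have hu' := R.hu (m+1) hm2
  have hv' := R.hv (m+1) hm2
  have huv' := R.huv (m+1) hm2
  rw [R.hstep m hm1] at hu' hv'
  rcases Finset.mem_insert.1 hu' with hu'' | hu'' <;>
    rcases Finset.mem_insert.1 hv' with hv'' | hv''
  · exact absurd (hu''.trans hv''.symm) huv'
  · rw [hu'']; exact key _ hv''
  · rw [hv'', R.hgsymm]; exact key _ hu''
  · have h1 := Finset.mem_of_mem_erase hu''
    have h2 := Finset.mem_of_mem_erase hv''
    exact R.hmax m hm1 _ _ (Finset.mem_of_mem_erase h1) (Finset.mem_of_mem_erase h2) huv'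
end

section
/- Let $\hat\alpha:[n]\times[n]\to\mathbb{R}$ be symmetric and let the agglomerative algorithm merge blocks by maximal average affinity. Suppose $u \subseteq [n]$ is a block formed by the algorithm at some step, with height $\hat H$ (the affinity of the pair merged to form $u$). Then there is no partition of $u$ into nonempty sets $A, B$ such that $\hat\alpha(k,l) < \hat H$ for all $k \in A, l \in B$. -/
namespace AggloRun

variable {n : ℕ} {f : Fin n → Fin n → ℝ}

lemma mem_step (R : AggloRun n f) {m : ℕ} (hm : m + 1 < n) {a : Finset (Fin n)}
    (ha : a ∈ R.P (m + 1)) :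
    a = R.u m ∪ R.v m ∨ (a ∈ R.P m ∧ a ≠ R.u m ∧ a ≠ R.v m) := by
  rw [R.hstep m hm] at ha
  rcases Finset.mem_insert.1 ha with h | h
  · exact Or.inl h
  · have h1 := Finset.mem_of_mem_erase h
    exact Or.inr ⟨Finset.mem_of_mem_erase h1, Finset.ne_of_mem_erase h1,
      Finset.ne_of_mem_erase h⟩

lemma inv (R : AggloRun n f) : ∀ m, m < n →
    (∀ a ∈ R.P m, a.Nonempty) ∧
    (∀ a ∈ R.P m, ∀ b ∈ R.P m, a ≠ b → Disjoint a b) := by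
  intro m
  induction m with
  | zero =>
    intro _
    constructor
    · intro a ha
      rw [R.hP0] at ha
      obtain ⟨i, _, rfl⟩ := Finset.mem_image.1 ha
      exact Finset.singleton_nonempty i
    · intro a ha b hb hab
      rw [R.hP0] at ha hb
      obtain ⟨i, _, rfl⟩ := Finset.mem_image.1 ha
      obtain ⟨j, _, rfl⟩ := Finset.mem_image.1 hb
      exact Finset.disjoint_singleton.2 (fun h => hab (by rw [h]))
  | succ m ih =>
    intro hm
    obtain ⟨hne, hdisj⟩ := ih (by omega)
    constructor
    · intro a ha
      rcases R.mem_step hm ha with rfl | ⟨ha', _, _⟩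
      · exact (hne _ (R.hu m hm)).mono Finset.subset_union_left
      · exact hne a ha'
    · intro a ha b hb hab
      rcases R.mem_step hm ha with rfl | ⟨ha', hau, hav⟩ <;>
        rcases R.mem_step hm hb with hb' | ⟨hb', hbu, hbv⟩
      · exact absurd hb' hab.symm
      · exact Finset.disjoint_union_left.2
          ⟨hdisj _ (R.hu m hm) _ hb' (Ne.symm hbu), hdisj _ (R.hv m hm) _ hb' (Ne.symm hbv)⟩
      · subst hb'
        exact (Finset.disjoint_union_left.2
          ⟨hdisj _ (R.hu m hm) _ ha' (Ne.symm hau),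
           hdisj _ (R.hv m hm) _ ha' (Ne.symm hav)⟩).symm
      · exact hdisj a ha' b hb' hab

lemma gsum (R : AggloRun n f) (hf : ∀ i j, f i j = f j i) : ∀ m, m < n →
    ∀ a ∈ R.P m, ∀ b ∈ R.P m, a ≠ b →
      R.g a b = (∑ k ∈ a, ∑ l ∈ b, f k l) / ((a.card : ℝ) * b.card) := by
  intro m
  induction m with
  | zero =>
    intro _ a ha b hb _
    rw [R.hP0] at ha hb
    obtain ⟨i, _, rfl⟩ := Finset.mem_image.1 ha
    obtain ⟨j, _, rfl⟩ := Finset.mem_image.1 hb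
    simp [R.hsingle]
  | succ m ih =>
    intro hm
    obtain ⟨hne, hdisj⟩ := R.inv m (by omega)
    have hd : Disjoint (R.u m) (R.v m) :=
      hdisj _ (R.hu m hm) _ (R.hv m hm) (R.huv m hm)
    have hcu : (0 : ℝ) < (R.u m).card := by
      exact_mod_cast Finset.card_pos.2 (hne _ (R.hu m hm))
    have hcv : (0 : ℝ) < (R.v m).card := by
      exact_mod_cast Finset.card_pos.2 (hne _ (R.hv m hm))
    have hcard : (((R.u m ∪ R.v m).card : ℝ)) = (R.u m).card + (R.v m).card := by
      rw [Finset.card_union_of_disjoint hd]; push_cast; ring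
    have key : ∀ t, t ∈ R.P m → t ≠ R.u m → t ≠ R.v m →
        R.g (R.u m ∪ R.v m) t
          = (∑ k ∈ R.u m ∪ R.v m, ∑ l ∈ t, f k l)
            / (((R.u m ∪ R.v m).card : ℝ) * t.card) := by
      intro t ht htu htv
      have ht' : t ∈ ((R.P m).erase (R.u m)).erase (R.v m) :=
        Finset.mem_erase.2 ⟨htv, Finset.mem_erase.2 ⟨htu, ht⟩⟩
      have hct : (0 : ℝ) < t.card := by
        exact_mod_cast Finset.card_pos.2 (hne _ ht)
      rw [R.hupdate m hm t ht',
        ih (by omega) _ (R.hu m hm) _ ht (Ne.symm htu),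
        ih (by omega) _ (R.hv m hm) _ ht (Ne.symm htv),
        Finset.sum_union hd, hcard]
      field_simp
    have hswap : ∀ (s t : Finset (Fin n)),
        (∑ k ∈ s, ∑ l ∈ t, f k l) = ∑ k ∈ t, ∑ l ∈ s, f k l := by
      intro s t
      rw [Finset.sum_comm]
      exact Finset.sum_congr rfl fun k _ => Finset.sum_congr rfl fun l _ => hf _ _
    intro a ha b hb hab
    rcases R.mem_step hm ha with rfl | ⟨ha', hau, hav⟩ <;>
      rcases R.mem_step hm hb with hb' | ⟨hb', hbu, hbv⟩
    · exact absurd hb' hab.symm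
    · exact key b hb' hbu hbv
    · subst hb'
      rw [R.hgsymm, key a ha' hau hav, hswap, mul_comm]
    · exact ih (by omega) a ha' b hb' hab

lemma shape (R : AggloRun n f) : ∀ m, m < n → ∀ a ∈ R.P m, 1 < a.card →
    ∃ m', m' < m ∧ m' + 1 < n ∧ a = R.u m' ∪ R.v m' := by
  intro m
  induction m with
  | zero =>
    intro _ a ha hcard
    rw [R.hP0] at ha
    obtain ⟨i, _, rfl⟩ := Finset.mem_image.1 ha
    simp at hcard
  | succ m ih =>
    intro hm a ha hcard
    rcases R.mem_step hm ha with rfl | ⟨ha', _, _⟩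
    · exact ⟨m, Nat.lt_succ_self m, hm, rfl⟩
    · obtain ⟨m', h1, h2, h3⟩ := ih (by omega) a ha' hcard
      exact ⟨m', by omega, h2, h3⟩

lemma mono_step (R : AggloRun n f) {m : ℕ} (hm : m + 2 < n) :
    R.g (R.u (m + 1)) (R.v (m + 1)) ≤ R.g (R.u m) (R.v m) := by
  have hm1 : m + 1 < n := by omega
  obtain ⟨hne, hdisj⟩ := R.inv m (by omega)
  have hd : Disjoint (R.u m) (R.v m) :=
    hdisj _ (R.hu m hm1) _ (R.hv m hm1) (R.huv m hm1)
  have hcu : (0 : ℝ) < (R.u m).card := by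
    exact_mod_cast Finset.card_pos.2 (hne _ (R.hu m hm1))
  have hcv : (0 : ℝ) < (R.v m).card := by
    exact_mod_cast Finset.card_pos.2 (hne _ (R.hv m hm1))
  have hcard : (((R.u m ∪ R.v m).card : ℝ)) = (R.u m).card + (R.v m).card := by
    rw [Finset.card_union_of_disjoint hd]; push_cast; ring
  have key : ∀ t, t ∈ R.P m → t ≠ R.u m → t ≠ R.v m →
      R.g (R.u m ∪ R.v m) t ≤ R.g (R.u m) (R.v m) := by
    intro t ht htu htv
    have ht' : t ∈ ((R.P m).erase (R.u m)).erase (R.v m) :=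
      Finset.mem_erase.2 ⟨htv, Finset.mem_erase.2 ⟨htu, ht⟩⟩
    have h1 := R.hmax m hm1 (R.u m) t (R.hu m hm1) ht (Ne.symm htu)
    have h2 := R.hmax m hm1 (R.v m) t (R.hv m hm1) ht (Ne.symm htv)
    rw [R.hupdate m hm1 t ht', hcard]
    have w1 : (0 : ℝ) ≤ (R.u m).card / ((R.u m).card + (R.v m).card) := by positivity
    have w2 : (0 : ℝ) ≤ (R.v m).card / ((R.u m).card + (R.v m).card) := by positivity
    have hsum : ((R.u m).card : ℝ) / ((R.u m).card + (R.v m).card)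
        + (R.v m).card / ((R.u m).card + (R.v m).card) = 1 := by
      field_simp
    calc ((R.u m).card : ℝ) / ((R.u m).card + (R.v m).card) * R.g (R.u m) t
          + (R.v m).card / ((R.u m).card + (R.v m).card) * R.g (R.v m) t
        ≤ ((R.u m).card : ℝ) / ((R.u m).card + (R.v m).card) * R.g (R.u m) (R.v m)
          + (R.v m).card / ((R.u m).card + (R.v m).card) * R.g (R.u m) (R.v m) :=
          add_le_add (mul_le_mul_of_nonneg_left h1 w1) (mul_le_mul_of_nonneg_left h2 w2)
      _ = R.g (R.u m) (R.v m) := by rw [← add_mul, hsum, one_mul]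
  have hu1 := R.hu (m + 1) hm
  have hv1 := R.hv (m + 1) hm
  have huv1 := R.huv (m + 1) hm
  rcases R.mem_step hm1 hu1 with h1 | ⟨h1, h1u, h1v⟩ <;>
    rcases R.mem_step hm1 hv1 with h2 | ⟨h2, h2u, h2v⟩
  · exact absurd (h1.trans h2.symm) huv1
  · rw [h1]; exact key _ h2 h2u h2v
  · rw [R.hgsymm, h2]; exact key _ h1 h1u h1v
  · exact R.hmax m hm1 _ _ h1 h2 huv1

lemma mono (R : AggloRun n f) : ∀ m, m + 1 < n → ∀ m', m' ≤ m →
    R.g (R.u m) (R.v m) ≤ R.g (R.u m') (R.v m') := by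
  intro m
  induction m with
  | zero =>
    intro _ m' hm'
    have : m' = 0 := Nat.le_zero.1 hm'
    subst this; exact le_rfl
  | succ m ih =>
    intro hm m' hm'
    rcases Nat.eq_or_lt_of_le hm' with h | h
    · subst h; exact le_rfl
    · exact le_trans (R.mono_step (by omega)) (ih (by omega) m' (by omega))

end AggloRun

/-- No sparse cut above the merge height: if the block `w = u_m ∪ v_m` is formed at step `m`
with height `Ĥ = ĝ(u_m, v_m)`, then there is no partition of `w` into nonempty sets `A, B`
with `f k l < Ĥ` for all `k ∈ A`, `l ∈ B`. -/
theorem stmt_7 (n : ℕ) (f : Fin n → Fin n → ℝ) (hf : ∀ i j, f i j = f j i)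
    (R : AggloRun n f) :
    ∀ m, m + 1 < n →
      ¬ ∃ A B : Finset (Fin n), A.Nonempty ∧ B.Nonempty ∧ Disjoint A B ∧
        A ∪ B = R.u m ∪ R.v m ∧
        ∀ k ∈ A, ∀ l ∈ B, f k l < R.g (R.u m) (R.v m) := by
  suffices h : ∀ m, m + 1 < n → ∀ H, H ≤ R.g (R.u m) (R.v m) →
      ∀ A B : Finset (Fin n), A.Nonempty → B.Nonempty → Disjoint A B →
      A ∪ B = R.u m ∪ R.v m → (∀ k ∈ A, ∀ l ∈ B, f k l < H) → False by
    rintro m hm ⟨A, B, hA, hB, hd, hun, hcut⟩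
    exact h m hm _ le_rfl A B hA hB hd hun hcut
  intro m
  induction m using Nat.strong_induction_on with
  | _ m ih =>
  intro hm H hH A B hA hB hd hun hcut
  obtain ⟨hne, hdisj⟩ := R.inv m (by omega)
  -- a block of P m meeting both A and B leads to a contradiction by recursion
  have key : ∀ w, w ∈ R.P m → (A ∩ w).Nonempty → (B ∩ w).Nonempty → w ⊆ A ∪ B → False := by
    intro w hw hAw hBw hwsub
    obtain ⟨a, ha⟩ := hAw
    obtain ⟨b, hb⟩ := hBw
    have hab : a ≠ b := fun h =>
      (Finset.disjoint_left.1 hd (Finset.mem_inter.1 ha).1) (h ▸ (Finset.mem_inter.1 hb).1)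
    have hcard : 1 < w.card :=
      Finset.one_lt_card.2 ⟨a, (Finset.mem_inter.1 ha).2, b, (Finset.mem_inter.1 hb).2, hab⟩
    obtain ⟨m', hm'lt, hm'n, rfl⟩ := R.shape m (by omega) w hw hcard
    refine ih m' hm'lt hm'n H (le_trans hH (R.mono m (by omega) m' (by omega)))
      (A ∩ (R.u m' ∪ R.v m')) (B ∩ (R.u m' ∪ R.v m')) ⟨a, ha⟩ ⟨b, hb⟩
      (hd.mono Finset.inter_subset_left Finset.inter_subset_left) ?_ ?_
    · rw [← Finset.union_inter_distrib_right]
      exact Finset.inter_eq_right.2 hwsub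
    · intro k hk l hl
      exact hcut k (Finset.mem_inter.1 hk).1 l (Finset.mem_inter.1 hl).1
  have husub : R.u m ⊆ A ∪ B := hun ▸ Finset.subset_union_left
  have hvsub : R.v m ⊆ A ∪ B := hun ▸ Finset.subset_union_right
  -- each of u m, v m is contained in A or in B
  have hsub : ∀ w, w ∈ R.P m → w ⊆ A ∪ B → w ⊆ A ∨ w ⊆ B := by
    intro w hw hwsub
    by_cases hA' : (A ∩ w).Nonempty
    · left
      intro x hx
      rcases Finset.mem_union.1 (hwsub hx) with h | h
      · exact h
      · exact absurd (key w hw hA' ⟨x, Finset.mem_inter.2 ⟨h, hx⟩⟩ hwsub) not_false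
    · right
      intro x hx
      rcases Finset.mem_union.1 (hwsub hx) with h | h
      · exact absurd ⟨x, Finset.mem_inter.2 ⟨h, hx⟩⟩ hA'
      · exact h
  -- WLOG u m ⊆ A and v m ⊆ B (or swapped): all cross pairs are < H
  have hpair : ∀ k ∈ R.u m, ∀ l ∈ R.v m, f k l < H := by
    rcases hsub _ (R.hu m hm) husub with hu' | hu' <;>
      rcases hsub _ (R.hv m hm) hvsub with hv' | hv'
    · exfalso
      obtain ⟨b, hb⟩ := hB
      have : b ∈ A := by
        rcases Finset.mem_union.1 (hun ▸ Finset.mem_union_right A hb :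
            b ∈ R.u m ∪ R.v m) with h | h
        · exact hu' h
        · exact hv' h
      exact Finset.disjoint_left.1 hd this hb
    · intro k hk l hl
      exact hcut k (hu' hk) l (hv' hl)
    · intro k hk l hl
      rw [hf]
      exact hcut l (hv' hl) k (hu' hk)
    · exfalso
      obtain ⟨a, ha⟩ := hA
      have : a ∈ B := by
        rcases Finset.mem_union.1 (hun ▸ Finset.mem_union_left B ha :
            a ∈ R.u m ∪ R.v m) with h | h
        · exact hu' h
        · exact hv' h
      exact Finset.disjoint_left.1 hd ha this
  -- now the average affinity is < H ≤ g (u m) (v m), contradiction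
  have hune := hne _ (R.hu m hm)
  have hvne := hne _ (R.hv m hm)
  have hcu : (0 : ℝ) < (R.u m).card := by exact_mod_cast Finset.card_pos.2 hune
  have hcv : (0 : ℝ) < (R.v m).card := by exact_mod_cast Finset.card_pos.2 hvne
  have hs : (∑ k ∈ R.u m, ∑ l ∈ R.v m, f k l)
      < ((R.u m).card : ℝ) * ((R.v m).card * H) := by
    have h1 : (∑ k ∈ R.u m, ∑ l ∈ R.v m, f k l)
        < ∑ _k ∈ R.u m, ((R.v m).card : ℝ) * H := by
      refine Finset.sum_lt_sum_of_nonempty hune fun k hk => ?_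
      have : ((R.v m).card : ℝ) * H = ∑ _l ∈ R.v m, H := by
        rw [Finset.sum_const, nsmul_eq_mul]
      rw [this]
      exact Finset.sum_lt_sum_of_nonempty hvne fun l hl => hpair k hk l hl
    calc (∑ k ∈ R.u m, ∑ l ∈ R.v m, f k l)
        < ∑ _k ∈ R.u m, ((R.v m).card : ℝ) * H := h1
      _ = ((R.u m).card : ℝ) * ((R.v m).card * H) := by
          rw [Finset.sum_const, nsmul_eq_mul]
  have hval := R.gsum hf m (by omega) _ (R.hu m hm) _ (R.hv m hm) (R.huv m hm)
  have : R.g (R.u m) (R.v m) < H := by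
    rw [hval, div_lt_iff₀ (by positivity)]
    nlinarith [hs]
  linarith
end
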